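/- arXiv:1703.06807 — 3 statements merged into one kernel-verified Lean document; each statement's English description precedes it below -/
import Mathlib

section
/- Let f_1, …, f_n : ℝ^d → ℝ each be convex and L-smooth, let r : ℝ^d → ℝ be convex, set f = (1/n)∑_i f_i and F = f + r, and let x* be a minimizer of F. If i is drawn uniformly at random from {1, …, n}, then for every x ∈ ℝ^d: E_i[‖∇f_i(x) − ∇f_i(x*)‖²] ≤ 2L (F(x) − F(x*)). -/
/-!
Comparing the value of `f i` at the gradient step `x - L⁻¹ (∇f_i(x) - ∇f_i(x*))` with the descent
lemma at `x` and with the supporting hyperplane at `x*` gives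
`‖∇f_i(x) - ∇f_i(x*)‖² ≤ 2L (f_i(x) - f_i(x*) - ⟪∇f_i(x*), x - x*⟫)`.
Averaging over `i`, the linear term becomes `⟪∇f(x*), x - x*⟫`, which is at least `r(x*) - r(x)`
by first-order optimality of `x*` for `f + r`.
-/

open Set
open scoped RealInnerProductSpace

section NormedSpace

variable {E : Type*} [NormedAddCommGroup E] [NormedSpace ℝ E]

theorem HasFDerivAt.hasDerivAt_comp_add_smul {f : E → ℝ} {f' : StrongDual ℝ E} {x v : E}
    {t : ℝ} (hf : HasFDerivAt f f' (x + t • v)) :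
    HasDerivAt (fun s : ℝ => f (x + s • v)) (f' v) t := by
  have hline : HasDerivAt (fun s : ℝ => x + s • v) v t := by
    simpa using ((hasDerivAt_id t).smul_const v).const_add x
  exact hf.comp_hasDerivAt t hline

theorem HasDerivAt.nonneg_of_isMinOn_Icc {φ : ℝ → ℝ} {D : ℝ} (hφ : HasDerivAt φ D 0)
    (hmin : IsMinOn φ (Icc 0 1) 0) : 0 ≤ D := by
  have hcone : (1 : ℝ) ∈ posTangentConeAt (Icc (0 : ℝ) 1) 0 :=
    mem_posTangentConeAt_of_segment_subset (by rw [zero_add, segment_eq_Icc zero_le_one])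
  simpa using hmin.localize.hasFDerivWithinAt_nonneg hφ.hasFDerivAt.hasFDerivWithinAt hcone

theorem ConvexOn.apply_add_smul_sub_le {f : E → ℝ} (hf : ConvexOn ℝ univ f) (x y : E) {t : ℝ}
    (ht : t ∈ Icc (0 : ℝ) 1) : f (x + t • (y - x)) ≤ f x + t * (f y - f x) := by
  have h := hf.2 (mem_univ x) (mem_univ y) (sub_nonneg.2 ht.2) ht.1 (sub_add_cancel 1 t)
  rw [smul_eq_mul, smul_eq_mul] at h
  rw [show x + t • (y - x) = (1 - t) • x + t • y by module]
  linarith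

theorem ConvexOn.add_fderiv_sub_le {f : E → ℝ} {f' : StrongDual ℝ E} {x : E}
    (hf : ConvexOn ℝ univ f) (hf' : HasFDerivAt f f' x) (y : E) :
    f x + f' (y - x) ≤ f y := by
  have hline : HasDerivAt (fun t : ℝ => f (x + t • (y - x))) (f' (y - x)) 0 :=
    HasFDerivAt.hasDerivAt_comp_add_smul (by simpa using hf')
  have hchord : HasDerivAt (fun t : ℝ => f x + t * (f y - f x)) (f y - f x) 0 := by
    simpa using ((hasDerivAt_id (0 : ℝ)).mul_const (f y - f x)).const_add (f x)
  have hgap : IsMinOn (fun t : ℝ => f x + t * (f y - f x) - f (x + t • (y - x))) (Icc 0 1) 0 :=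
    fun t ht => by simpa using hf.apply_add_smul_sub_le x y ht
  linarith [(hchord.sub hline).nonneg_of_isMinOn_Icc hgap]

theorem HasFDerivAt.nonneg_apply_sub_add_of_isMinOn_add {h r : E → ℝ} {h' : StrongDual ℝ E}
    {x₀ : E} (hh : HasFDerivAt h h' x₀) (hr : ConvexOn ℝ univ r) (hmin : IsMinOn (h + r) univ x₀)
    (x : E) : 0 ≤ h' (x - x₀) + (r x - r x₀) := by
  have hline : HasDerivAt (fun t : ℝ => h (x₀ + t • (x - x₀))) (h' (x - x₀)) 0 :=
    HasFDerivAt.hasDerivAt_comp_add_smul (by simpa using hh)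
  have hchord : HasDerivAt (fun t : ℝ => t * (r x - r x₀)) (r x - r x₀) 0 := by
    simpa using (hasDerivAt_id (0 : ℝ)).mul_const (r x - r x₀)
  have hmin' : IsMinOn (fun t : ℝ => h (x₀ + t • (x - x₀)) + t * (r x - r x₀)) (Icc 0 1) 0 :=
    fun t ht => by
      have hmin_t := isMinOn_univ_iff.1 hmin (x₀ + t • (x - x₀))
      have hr_t := hr.apply_add_smul_sub_le x₀ x ht
      simp only [Pi.add_apply] at hmin_t
      simp only [mem_ofPred_eq, zero_smul, add_zero, zero_mul]
      linarith
  exact (hline.add hchord).nonneg_of_isMinOn_Icc hmin'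

theorem apply_add_le_of_lipschitz_fderiv {f : E → ℝ} {f' : E → StrongDual ℝ E} {L : ℝ}
    (hf : ∀ z, HasFDerivAt f (f' z) z) (hlip : ∀ a b, ‖f' a - f' b‖ ≤ L * ‖a - b‖) (x v : E) :
    f (x + v) ≤ f x + f' x v + L / 2 * ‖v‖ ^ 2 := by
  set χ : ℝ → ℝ := fun t => f (x + t • v) - t * f' x v - L / 2 * t ^ 2 * ‖v‖ ^ 2
  have hχ : ∀ t : ℝ, HasDerivAt χ (f' (x + t • v) v - f' x v - L * t * ‖v‖ ^ 2) t := by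
    intro t
    have hpoly : HasDerivAt (fun s : ℝ => L / 2 * s ^ 2 * ‖v‖ ^ 2) (L * t * ‖v‖ ^ 2) t :=
      (((hasDerivAt_pow 2 t).const_mul (L / 2)).mul_const (‖v‖ ^ 2)).congr_deriv
        (by push_cast; ring)
    exact (((hf _).hasDerivAt_comp_add_smul).sub
      ((hasDerivAt_id t).mul_const (f' x v))).sub hpoly |>.congr_deriv (by simp)
  have hslope : ∀ t ∈ interior (Icc (0 : ℝ) 1),
      f' (x + t • v) v - f' x v - L * t * ‖v‖ ^ 2 ≤ 0 := by
    intro t ht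
    rw [interior_Icc] at ht
    have hdiff : (f' (x + t • v) - f' x) v ≤ L * t * ‖v‖ ^ 2 :=
      calc (f' (x + t • v) - f' x) v ≤ ‖f' (x + t • v) - f' x‖ * ‖v‖ :=
            (Real.le_norm_self _).trans (ContinuousLinearMap.le_opNorm _ _)
        _ ≤ L * ‖t • v‖ * ‖v‖ := by
            gcongr
            simpa using hlip (x + t • v) x
        _ = L * t * ‖v‖ ^ 2 := by rw [norm_smul, Real.norm_of_nonneg ht.1.le]; ring
    simp only [sub_apply] at hdiff
    linarith
  have hanti : AntitoneOn χ (Icc 0 1) :=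
    antitoneOn_of_hasDerivWithinAt_nonpos (convex_Icc 0 1)
      (fun t _ => (hχ t).continuousAt.continuousWithinAt)
      (fun t _ => (hχ t).hasDerivWithinAt) hslope
  have h01 := hanti (left_mem_Icc.2 zero_le_one) (right_mem_Icc.2 zero_le_one) zero_le_one
  norm_num [χ] at h01
  linarith

end NormedSpace

section InnerProductSpace

variable {E : Type*} [NormedAddCommGroup E] [InnerProductSpace ℝ E] [CompleteSpace E]

theorem ConvexOn.norm_sub_gradient_sq_le {f : E → ℝ} {g : E → E} {L : ℝ}
    (hf : ConvexOn ℝ univ f) (hg : ∀ z, HasGradientAt f (g z) z) (hL : 0 < L)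
    (hlip : ∀ a b, ‖g a - g b‖ ≤ L * ‖a - b‖) (x y : E) :
    ‖g x - g y‖ ^ 2 ≤ 2 * L * (f x - f y - ⟪g y, x - y⟫) := by
  set w := g x - g y
  have hdescent := apply_add_le_of_lipschitz_fderiv (fun z => (hg z).hasFDerivAt)
    (fun a b => by rw [← map_sub, LinearIsometryEquiv.norm_map]; exact hlip a b) x (-(L⁻¹ • w))
  have hsupport := hf.add_fderiv_sub_le (hg y).hasFDerivAt (x + -(L⁻¹ • w))
  have hw : ⟪g x, w⟫ - ⟪g y, w⟫ = ‖w‖ ^ 2 := by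
    rw [← inner_sub_left, real_inner_self_eq_norm_sq]
  simp only [InnerProductSpace.toDual_apply_apply, add_sub_right_comm x, inner_add_right,
    inner_neg_right, real_inner_smul_right, norm_neg, norm_smul, mul_pow,
    Real.norm_of_nonneg (inv_nonneg.2 hL.le)] at hdescent hsupport
  have hcross : L⁻¹ * ⟪g x, w⟫ - L⁻¹ * ⟪g y, w⟫ = L⁻¹ * ‖w‖ ^ 2 := by rw [← mul_sub, hw]
  have hquad : L / 2 * (L⁻¹ ^ 2 * ‖w‖ ^ 2) = L⁻¹ * ‖w‖ ^ 2 - ‖w‖ ^ 2 / (2 * L) := by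
    field_simp; ring
  have key : ‖w‖ ^ 2 / (2 * L) ≤ f x - f y - ⟪g y, x - y⟫ := by linarith
  rwa [div_le_iff₀' (by positivity)] at key

end InnerProductSpace

theorem expected_gradient_gap_bound_general {d n : ℕ} (L : ℝ) (hL : 0 < L)
    (f : Fin n → EuclideanSpace ℝ (Fin d) → ℝ)
    (f' : Fin n → EuclideanSpace ℝ (Fin d) → EuclideanSpace ℝ (Fin d))
    (r : EuclideanSpace ℝ (Fin d) → ℝ)
    (hgrad : ∀ i x, HasGradientAt (f i) (f' i x) x)
    (hfconv : ∀ i, ConvexOn ℝ Set.univ (f i))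
    (hsmooth : ∀ i x y, ‖f' i x - f' i y‖ ≤ L * ‖x - y‖)
    (hrconv : ConvexOn ℝ Set.univ r)
    (F : EuclideanSpace ℝ (Fin d) → ℝ)
    (hF : ∀ x, F x = (n : ℝ)⁻¹ * ∑ i, f i x + r x)
    (xstar : EuclideanSpace ℝ (Fin d)) (hmin : ∀ x, F xstar ≤ F x) :
    ∀ x, (n : ℝ)⁻¹ * ∑ i, ‖f' i x - f' i xstar‖ ^ 2 ≤ 2 * L * (F x - F xstar) := by
  intro x
  have hcoco i := (hfconv i).norm_sub_gradient_sq_le (hgrad i) hL (hsmooth i) x xstar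
  have hopt := ((HasFDerivAt.fun_sum (u := Finset.univ) fun i _ =>
    (hgrad i xstar).hasFDerivAt).const_mul (n : ℝ)⁻¹).nonneg_apply_sub_add_of_isMinOn_add hrconv
    (isMinOn_univ_iff.2 fun y => by simpa only [Pi.add_apply, hF] using hmin y) x
  simp only [smul_apply, sum_apply, InnerProductSpace.toDual_apply_apply, smul_eq_mul] at hopt
  calc (n : ℝ)⁻¹ * ∑ i, ‖f' i x - f' i xstar‖ ^ 2
      ≤ (n : ℝ)⁻¹ * ∑ i, 2 * L * (f i x - f i xstar - ⟪f' i xstar, x - xstar⟫) := by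
        gcongr with i; exact hcoco i
    _ = 2 * L * ((n : ℝ)⁻¹ * ∑ i, f i x - (n : ℝ)⁻¹ * ∑ i, f i xstar
          - (n : ℝ)⁻¹ * ∑ i, ⟪f' i xstar, x - xstar⟫) := by
        simp only [← Finset.mul_sum, Finset.sum_sub_distrib]; ring
    _ ≤ 2 * L * (F x - F xstar) := by
        rw [hF, hF]; exact mul_le_mul_of_nonneg_left (by linarith) (by positivity)

theorem expected_gradient_gap_bound {d n : ℕ} (hn : 0 < n) (L : ℝ) (hL : 0 < L)
    (f : Fin n → EuclideanSpace ℝ (Fin d) → ℝ)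
    (f' : Fin n → EuclideanSpace ℝ (Fin d) → EuclideanSpace ℝ (Fin d))
    (r : EuclideanSpace ℝ (Fin d) → ℝ)
    (hgrad : ∀ i x, HasGradientAt (f i) (f' i x) x)
    (hfconv : ∀ i, ConvexOn ℝ Set.univ (f i))
    (hsmooth : ∀ i x y, ‖f' i x - f' i y‖ ≤ L * ‖x - y‖)
    (hrconv : ConvexOn ℝ Set.univ r)
    (F : EuclideanSpace ℝ (Fin d) → ℝ)
    (hF : ∀ x, F x = (n : ℝ)⁻¹ * ∑ i, f i x + r x)
    (xstar : EuclideanSpace ℝ (Fin d)) (hmin : ∀ x, F xstar ≤ F x) :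
    ∀ x, (n : ℝ)⁻¹ * ∑ i, ‖f' i x - f' i xstar‖ ^ 2 ≤ 2 * L * (F x - F xstar) :=
  expected_gradient_gap_bound_general L hL f f' r hgrad hfconv hsmooth hrconv F hF xstar hmin
end

section
/- Let f_1, …, f_n : ℝ^d → ℝ be convex and L-smooth, r convex, F = (1/n)∑_i f_i + r with minimizer x*. Fix points x, x̃ ∈ ℝ^d and let i be uniform on {1, …, n}. Define the SVRG gradient estimator p_i = ∇f_i(x) − ∇f_i(x̃) + ∇f(x̃) where f = (1/n)∑_j f_j. Then E_i[‖p_i − ∇f(x)‖²] ≤ 4L (F(x) − F(x*) + F(x̃) − F(x*)). -/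
/-!
For each `i`, the tilted function `f_i - ⟪∇f_i(x*), ·⟫` is convex, `L`-smooth and minimized at
`x*`, so one gradient step from `y` together with the descent lemma gives
`‖∇f_i(y) - ∇f_i(x*)‖² ≤ 2L (f_i(y) - f_i(x*) - ⟪∇f_i(x*), y - x*⟫)`. Averaging over `i` and using
the optimality condition `r(x*) - r(y) ≤ ⟪∇f(x*), y - x*⟫` bounds the mean of the left side by
`2L (F(y) - F(x*))`. Finally `p_i - ∇f(x)` is the centred version of
`∇f_i(x) - ∇f_i(x̃) = (∇f_i(x) - ∇f_i(x*)) - (∇f_i(x̃) - ∇f_i(x*))`; the variance is at most the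
second moment, and `‖a - b‖² ≤ 2‖a‖² + 2‖b‖²`, which applied at `y = x` and `y = x̃` gives `4L`.
-/

open scoped RealInnerProductSpace

open Set

theorem Finset.sum_sq_norm_sub_mean_le {ι E : Type*} [NormedAddCommGroup E] [InnerProductSpace ℝ E]
    (s : Finset ι) (c : ι → E) :
    ∑ i ∈ s, ‖c i - (s.card : ℝ)⁻¹ • ∑ j ∈ s, c j‖ ^ 2 ≤ ∑ i ∈ s, ‖c i‖ ^ 2 := by
  have hexpand : ∑ i ∈ s, ‖c i - (s.card : ℝ)⁻¹ • ∑ j ∈ s, c j‖ ^ 2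
      = ∑ i ∈ s, ‖c i‖ ^ 2 - (s.card : ℝ)⁻¹ * ‖∑ j ∈ s, c j‖ ^ 2 := by
    simp only [norm_sub_sq_real, Finset.sum_add_distrib, Finset.sum_sub_distrib, Finset.sum_const,
      nsmul_eq_mul, real_inner_smul_right, ← Finset.mul_sum, ← sum_inner,
      real_inner_self_eq_norm_sq, norm_smul, norm_inv, Real.norm_natCast]
    rcases eq_or_ne (s.card : ℝ) 0 with hs | hs
    · simp [hs]
    · field_simp
      ring
  rw [hexpand]
  have : 0 ≤ (s.card : ℝ)⁻¹ * ‖∑ j ∈ s, c j‖ ^ 2 := by positivity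
  linarith

theorem Finset.sum_sq_norm_sub_sub_mean_le {ι E : Type*} [NormedAddCommGroup E]
    [InnerProductSpace ℝ E] (s : Finset ι) (u v : ι → E) :
    ∑ i ∈ s, ‖(u i - v i) - (s.card : ℝ)⁻¹ • ∑ j ∈ s, (u j - v j)‖ ^ 2
      ≤ 2 * ∑ i ∈ s, ‖u i‖ ^ 2 + 2 * ∑ i ∈ s, ‖v i‖ ^ 2 := by
  refine (s.sum_sq_norm_sub_mean_le _).trans ?_
  rw [Finset.mul_sum, Finset.mul_sum, ← Finset.sum_add_distrib]
  gcongr with i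
  nlinarith [norm_sub_le (u i) (v i), add_sq_le (a := ‖u i‖) (b := ‖v i‖), norm_nonneg (u i - v i)]

section Gradient

variable {E : Type*} [NormedAddCommGroup E] [InnerProductSpace ℝ E] [CompleteSpace E]

theorem HasGradientAt.hasDerivAt_comp_add_smul {h : E → ℝ} {g a v : E} {t : ℝ}
    (hg : HasGradientAt h g (a + t • v)) :
    HasDerivAt (fun s : ℝ => h (a + s • v)) ⟪g, v⟫ t := by
  have hline : HasDerivAt (fun s : ℝ => a + s • v) v t := by
    simpa using ((hasDerivAt_id t).smul_const v).const_add a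
  simpa [Function.comp_def] using
    (hasGradientAt_iff_hasFDerivAt.mp hg).comp_hasDerivAt t hline

theorem HasGradientAt.sub_inner_const {h : E → ℝ} {g x : E} (hg : HasGradientAt h g x) (c : E) :
    HasGradientAt (fun w => h w - ⟪c, w⟫) (g - c) x := by
  rw [hasGradientAt_iff_hasFDerivAt] at hg ⊢
  refine (hg.sub (innerSL ℝ c).hasFDerivAt).congr_fderiv ?_
  ext w
  simp

theorem hasGradientAt_const_mul_sum {ι : Type*} (s : Finset ι) {f : ι → E → ℝ} {f' : ι → E}
    {x : E} (c : ℝ) (hf : ∀ i ∈ s, HasGradientAt (f i) (f' i) x) :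
    HasGradientAt (fun w => c * ∑ i ∈ s, f i w) (c • ∑ i ∈ s, f' i) x := by
  simp only [hasGradientAt_iff_hasFDerivAt] at hf ⊢
  refine ((HasFDerivAt.fun_sum hf).const_mul c).congr_fderiv ?_
  simp [map_sum]

theorem ConvexOn.add_inner_le_of_hasGradientAt {h : E → ℝ} {g u : E}
    (hconv : ConvexOn ℝ univ h) (hg : HasGradientAt h g u) (w : E) :
    h u + ⟪g, w - u⟫ ≤ h w := by
  have hline : ConvexOn ℝ univ (fun t : ℝ => h (u + t • (w - u))) := by
    simpa [Function.comp_def, AffineMap.lineMap_apply, add_comm] using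
      hconv.comp_affineMap (AffineMap.lineMap u w : ℝ →ᵃ[ℝ] E)
  have hder : HasDerivAt (fun t : ℝ => h (u + t • (w - u))) ⟪g, w - u⟫ 0 :=
    HasGradientAt.hasDerivAt_comp_add_smul (by simpa using hg)
  have := hline.le_slope_of_hasDerivAt (mem_univ 0) (mem_univ 1) zero_lt_one hder
  simp only [slope_def_field, one_smul, add_sub_cancel, zero_smul, add_zero, sub_zero, div_one] at this
  linarith

theorem le_add_inner_add_sq_of_lipschitz_gradient {h : E → ℝ} {h' : E → E} {L : ℝ}
    (hg : ∀ z, HasGradientAt h (h' z) z) (hlip : ∀ a b, ‖h' a - h' b‖ ≤ L * ‖a - b‖)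
    (a b : E) : h b ≤ h a + ⟪h' a, b - a⟫ + L / 2 * ‖b - a‖ ^ 2 := by
  set v := b - a
  have hφ (t : ℝ) : HasDerivAt (fun s => h (a + s • v) - s * ⟪h' a, v⟫)
      (⟪h' (a + t • v), v⟫ - ⟪h' a, v⟫) t := by
    simpa using (hg _).hasDerivAt_comp_add_smul.fun_sub ((hasDerivAt_id t).mul_const ⟪h' a, v⟫)
  have hB (t : ℝ) : HasDerivAt (fun s => h a + L / 2 * ‖v‖ ^ 2 * s ^ 2) (L * ‖v‖ ^ 2 * t) t := by
    refine (((hasDerivAt_pow 2 t).const_mul (L / 2 * ‖v‖ ^ 2)).const_add (h a)).congr_deriv ?_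
    push_cast
    ring
  have hslope {t : ℝ} (ht : 0 ≤ t) : ⟪h' (a + t • v), v⟫ - ⟪h' a, v⟫ ≤ L * ‖v‖ ^ 2 * t :=
    calc ⟪h' (a + t • v), v⟫ - ⟪h' a, v⟫ = ⟪h' (a + t • v) - h' a, v⟫ := (inner_sub_left ..).symm
      _ ≤ ‖h' (a + t • v) - h' a‖ * ‖v‖ := real_inner_le_norm _ _
      _ ≤ L * ‖t • v‖ * ‖v‖ := by gcongr; simpa using hlip (a + t • v) a
      _ = L * ‖v‖ ^ 2 * t := by rw [norm_smul, Real.norm_of_nonneg ht]; ring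
  have := image_le_of_deriv_right_le_deriv_boundary (a := 0) (b := 1)
    (fun t _ => (hφ t).continuousAt.continuousWithinAt) (fun t _ => (hφ t).hasDerivWithinAt)
    (by simp) (fun t _ => (hB t).continuousAt.continuousWithinAt) (fun t _ => (hB t).hasDerivWithinAt)
    (fun t ht => hslope ht.1) (right_mem_Icc.2 zero_le_one)
  simp only [v, one_smul, one_mul, one_pow, mul_one, add_sub_cancel] at this ⊢
  linarith

theorem sq_norm_gradient_le_of_isMinOn {h : E → ℝ} {h' : E → E} {L : ℝ} {z : E} (hL : 0 < L)
    (hg : ∀ z, HasGradientAt h (h' z) z) (hlip : ∀ a b, ‖h' a - h' b‖ ≤ L * ‖a - b‖)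
    (hmin : IsMinOn h univ z) (y : E) : ‖h' y‖ ^ 2 ≤ 2 * L * (h y - h z) := by
  have hstep := le_add_inner_add_sq_of_lipschitz_gradient hg hlip y (y - L⁻¹ • h' y)
  have hz := isMinOn_iff.1 hmin _ (mem_univ (y - L⁻¹ • h' y))
  rw [sub_sub_cancel_left, inner_neg_right, real_inner_smul_right, real_inner_self_eq_norm_sq,
    norm_neg, norm_smul, Real.norm_of_nonneg (inv_nonneg.2 hL.le)] at hstep
  have hquad : L / 2 * (L⁻¹ * ‖h' y‖) ^ 2 - L⁻¹ * ‖h' y‖ ^ 2 = -(‖h' y‖ ^ 2 / (2 * L)) := by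
    field_simp
    ring
  calc ‖h' y‖ ^ 2 = 2 * L * (‖h' y‖ ^ 2 / (2 * L)) := by field_simp
    _ ≤ 2 * L * (h y - h z) := by gcongr; linarith

theorem ConvexOn.sq_norm_sub_gradient_le {h : E → ℝ} {h' : E → E} {L : ℝ} (hL : 0 < L)
    (hconv : ConvexOn ℝ univ h) (hg : ∀ z, HasGradientAt h (h' z) z)
    (hlip : ∀ a b, ‖h' a - h' b‖ ≤ L * ‖a - b‖) (y z : E) :
    ‖h' y - h' z‖ ^ 2 ≤ 2 * L * (h y - h z - ⟪h' z, y - z⟫) := by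
  have hmin : IsMinOn (fun w => h w - ⟪h' z, w⟫) univ z := isMinOn_iff.2 fun w _ => by
    have := hconv.add_inner_le_of_hasGradientAt (hg z) w
    simp only [inner_sub_right] at this ⊢
    linarith
  have := sq_norm_gradient_le_of_isMinOn hL (fun w => (hg w).sub_inner_const (h' z))
    (fun a b => by simpa using hlip a b) hmin y
  rw [inner_sub_right]
  linarith

theorem ConvexOn.sub_le_inner_gradient_of_isMinOn_add {S r : E → ℝ} {g xstar : E}
    (hS : HasGradientAt S g xstar) (hr : ConvexOn ℝ univ r) (hmin : IsMinOn (S + r) univ xstar)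
    (y : E) : r xstar - r y ≤ ⟪g, y - xstar⟫ := by
  set v := y - xstar
  let ψ : ℝ → ℝ := fun t => S (xstar + t • v) + t * (r y - r xstar)
  have hψ : HasDerivAt ψ (⟪g, v⟫ + (r y - r xstar)) 0 := by
    simpa using (HasGradientAt.hasDerivAt_comp_add_smul (t := 0) (by simpa using hS)).fun_add
      ((hasDerivAt_id (0 : ℝ)).mul_const (r y - r xstar))
  have hψmin : IsMinOn ψ (Icc 0 1) 0 := isMinOn_iff.2 fun t ht => by
    have hchord : r (xstar + t • v) ≤ (1 - t) * r xstar + t * r y := by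
      rw [show xstar + t • v = (1 - t) • xstar + t • y by module]
      exact hr.2 (mem_univ xstar) (mem_univ y) (sub_nonneg.2 ht.2) ht.1 (by ring)
    have hle : S xstar + r xstar ≤ S (xstar + t • v) + r (xstar + t • v) :=
      isMinOn_iff.1 hmin _ (mem_univ _)
    simp only [ψ, zero_smul, add_zero, zero_mul]
    linarith
  have := hψmin.localize.hasFDerivWithinAt_nonneg hψ.hasFDerivAt.hasFDerivWithinAt
    (y := 1) (mem_posTangentConeAt_of_segment_subset (by simp [segment_eq_Icc]))
  simp only [ContinuousLinearMap.toSpanSingleton_apply, smul_eq_mul, one_mul] at this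
  linarith

theorem mean_sq_norm_sub_gradient_le {ι : Type*} [Fintype ι] {f : ι → E → ℝ} {f' : ι → E → E}
    {r F : E → ℝ} {L : ℝ} {xstar : E} (hL : 0 < L) (hgrad : ∀ i x, HasGradientAt (f i) (f' i x) x)
    (hfconv : ∀ i, ConvexOn ℝ univ (f i)) (hsmooth : ∀ i x y, ‖f' i x - f' i y‖ ≤ L * ‖x - y‖)
    (hrconv : ConvexOn ℝ univ r) (hF : ∀ x, F x = (Fintype.card ι : ℝ)⁻¹ * ∑ i, f i x + r x)
    (hmin : IsMinOn F univ xstar) (y : E) :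
    (Fintype.card ι : ℝ)⁻¹ * ∑ i, ‖f' i y - f' i xstar‖ ^ 2 ≤ 2 * L * (F y - F xstar) := by
  set N := (Fintype.card ι : ℝ)⁻¹
  have hS : HasGradientAt (fun w => N * ∑ i, f i w) (N • ∑ i, f' i xstar) xstar :=
    hasGradientAt_const_mul_sum _ _ fun i _ => hgrad i xstar
  have hopt := hrconv.sub_le_inner_gradient_of_isMinOn_add hS
    (by simpa only [Pi.add_def, ← hF] using hmin) y
  calc N * ∑ i, ‖f' i y - f' i xstar‖ ^ 2
      ≤ N * ∑ i, 2 * L * (f i y - f i xstar - ⟪f' i xstar, y - xstar⟫) := by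
        gcongr with i
        exact (hfconv i).sq_norm_sub_gradient_le hL (hgrad i) (hsmooth i) y xstar
    _ = 2 * L * (N * ∑ i, f i y - N * ∑ i, f i xstar - ⟪N • ∑ i, f' i xstar, y - xstar⟫) := by
        rw [real_inner_smul_left, sum_inner, ← Finset.mul_sum, Finset.sum_sub_distrib,
          Finset.sum_sub_distrib]
        ring
    _ ≤ 2 * L * (F y - F xstar) := by
        rw [hF, hF]
        exact mul_le_mul_of_nonneg_left (by linarith) (by positivity)

end Gradient

theorem svrg_variance_bound_general {d n : ℕ} (L : ℝ) (hL : 0 < L)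
    (f : Fin n → EuclideanSpace ℝ (Fin d) → ℝ)
    (f' : Fin n → EuclideanSpace ℝ (Fin d) → EuclideanSpace ℝ (Fin d))
    (r : EuclideanSpace ℝ (Fin d) → ℝ)
    (hgrad : ∀ i x, HasGradientAt (f i) (f' i x) x)
    (hfconv : ∀ i, ConvexOn ℝ Set.univ (f i))
    (hsmooth : ∀ i x y, ‖f' i x - f' i y‖ ≤ L * ‖x - y‖)
    (hrconv : ConvexOn ℝ Set.univ r)
    (F : EuclideanSpace ℝ (Fin d) → ℝ)
    (hF : ∀ x, F x = (n : ℝ)⁻¹ * ∑ i, f i x + r x)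
    (xstar : EuclideanSpace ℝ (Fin d)) (hmin : ∀ x, F xstar ≤ F x)
    (x xt : EuclideanSpace ℝ (Fin d))
    (gradf : EuclideanSpace ℝ (Fin d) → EuclideanSpace ℝ (Fin d))
    (hgradf : ∀ z, gradf z = (n : ℝ)⁻¹ • ∑ j, f' j z)
    (p : Fin n → EuclideanSpace ℝ (Fin d))
    (hp : ∀ i, p i = f' i x - f' i xt + gradf xt) :
    (n : ℝ)⁻¹ * ∑ i, ‖p i - gradf x‖ ^ 2 ≤
      4 * L * (F x - F xstar + F xt - F xstar) := by
  have hmean (y : EuclideanSpace ℝ (Fin d)) :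
      (n : ℝ)⁻¹ * ∑ i, ‖f' i y - f' i xstar‖ ^ 2 ≤ 2 * L * (F y - F xstar) := by
    simpa using mean_sq_norm_sub_gradient_le hL hgrad hfconv hsmooth hrconv
      (by simpa using hF) (isMinOn_univ_iff.2 hmin) y
  have hcentered (i : Fin n) : p i - gradf x = ((f' i x - f' i xstar) - (f' i xt - f' i xstar))
      - (n : ℝ)⁻¹ • ∑ j, ((f' j x - f' j xstar) - (f' j xt - f' j xstar)) := by
    simp only [hp, hgradf, Finset.sum_sub_distrib, smul_sub]
    abel
  calc (n : ℝ)⁻¹ * ∑ i, ‖p i - gradf x‖ ^ 2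
      ≤ (n : ℝ)⁻¹ * (2 * ∑ i, ‖f' i x - f' i xstar‖ ^ 2 + 2 * ∑ i, ‖f' i xt - f' i xstar‖ ^ 2) := by
        simp only [hcentered]
        gcongr
        simpa using Finset.univ.sum_sq_norm_sub_sub_mean_le (fun i => f' i x - f' i xstar)
          (fun i => f' i xt - f' i xstar)
    _ ≤ 4 * L * (F x - F xstar + F xt - F xstar) := by
        linarith [hmean x, hmean xt]

theorem svrg_variance_bound {d n : ℕ} (hn : 0 < n) (L : ℝ) (hL : 0 < L)
    (f : Fin n → EuclideanSpace ℝ (Fin d) → ℝ)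
    (f' : Fin n → EuclideanSpace ℝ (Fin d) → EuclideanSpace ℝ (Fin d))
    (r : EuclideanSpace ℝ (Fin d) → ℝ)
    (hgrad : ∀ i x, HasGradientAt (f i) (f' i x) x)
    (hfconv : ∀ i, ConvexOn ℝ Set.univ (f i))
    (hsmooth : ∀ i x y, ‖f' i x - f' i y‖ ≤ L * ‖x - y‖)
    (hrconv : ConvexOn ℝ Set.univ r)
    (F : EuclideanSpace ℝ (Fin d) → ℝ)
    (hF : ∀ x, F x = (n : ℝ)⁻¹ * ∑ i, f i x + r x)
    (xstar : EuclideanSpace ℝ (Fin d)) (hmin : ∀ x, F xstar ≤ F x)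
    (x xt : EuclideanSpace ℝ (Fin d))
    (gradf : EuclideanSpace ℝ (Fin d) → EuclideanSpace ℝ (Fin d))
    (hgradf : ∀ z, gradf z = (n : ℝ)⁻¹ • ∑ j, f' j z)
    (p : Fin n → EuclideanSpace ℝ (Fin d))
    (hp : ∀ i, p i = f' i x - f' i xt + gradf xt) :
    (n : ℝ)⁻¹ * ∑ i, ‖p i - gradf x‖ ^ 2 ≤
      4 * L * (F x - F xstar + F xt - F xstar) :=
  svrg_variance_bound_general L hL f f' r hgrad hfconv hsmooth hrconv F hF xstar hmin x xt gradf
    hgradf p hp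
end

section
/- Under the setting of the SVRG variance bound (each f_i convex and L-smooth, F = (1/n)∑f_i + r with minimizer x*, i uniform on {1,…,n}, p_i = ∇f_i(x) − ∇f_i(x̃) + ∇f(x̃)): for any real numbers α ≥ β > 0, α · E_i[‖p_i − ∇f(x)‖²] − β · E_i[‖∇f_i(x) − ∇f_i(x̃)‖²] ≤ 4L(α − β)(F(x) − F(x*) + F(x̃) − F(x*)). -/
/-!
Centering only lowers the second moment, so the variance `V` of the `p_i` is at most the mean `S`
of `‖∇f_i(x) - ∇f_i(x̃)‖²`, whence `α V - β S ≤ (α - β) S`. Co-coercivity of the gradient of a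
convex `L`-smooth function, `‖∇f_i(x) - ∇f_i(y)‖² ≤ 2L D_{f_i}(x, y)` with `D` the Bregman
divergence, applied with `y = x*` at `x` and at `x̃`, bounds `S` by `4L` times the averaged
divergences from `x*`; by the first-order optimality condition of the composite problem, the
averaged divergence of a point from `x*` is at most its gap `F(·) - F(x*)`.
-/

open scoped RealInnerProductSpace
open Finset AffineMap

section InnerProductSpace

variable {E : Type*} [NormedAddCommGroup E] [InnerProductSpace ℝ E]

def bregmanDiv (f : E → ℝ) (f' : E → E) (x y : E) : ℝ :=
  f x - f y - ⟪f' y, x - y⟫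

theorem bregmanDiv_const_mul_sum {ι : Type*} (s : Finset ι) (f : ι → E → ℝ) (f' : ι → E → E)
    (c : ℝ) (x y : E) :
    bregmanDiv (fun z => c * ∑ i ∈ s, f i z) (fun z => c • ∑ i ∈ s, f' i z) x y =
      c * ∑ i ∈ s, bregmanDiv (f i) (f' i) x y := by
  simp only [bregmanDiv, real_inner_smul_left, sum_inner, mul_sub, sum_sub_distrib]

theorem sum_norm_sub_mean_sq_le {ι : Type*} [Fintype ι] (a : ι → E) :
    ∑ i, ‖a i - (Fintype.card ι : ℝ)⁻¹ • ∑ j, a j‖ ^ 2 ≤ ∑ i, ‖a i‖ ^ 2 := by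
  set N : ℝ := (Fintype.card ι : ℝ)
  set m := N⁻¹ • ∑ j, a j
  have hexpand : ∑ i, ‖a i - m‖ ^ 2 = ∑ i, ‖a i‖ ^ 2 - 2 * ⟪∑ j, a j, m⟫ + N * ‖m‖ ^ 2 := by
    simp only [norm_sub_sq_real, sum_add_distrib, sum_sub_distrib, ← mul_sum, ← sum_inner,
      sum_const, card_univ, nsmul_eq_mul, N]
  have hinner : ⟪∑ j, a j, m⟫ = N * ‖m‖ ^ 2 := by
    rcases isEmpty_or_nonempty ι with hι | hι
    · simp [m]
    · have : ∑ j, a j = N • m := by simp [m, smul_smul, N, Fintype.card_ne_zero]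
      rw [this, real_inner_smul_left, real_inner_self_eq_norm_sq]
  have hN : 0 ≤ N := Nat.cast_nonneg _
  nlinarith [sq_nonneg ‖m‖]

variable [CompleteSpace E]

theorem HasGradientAt.hasDerivAt_comp_lineMap {f : E → ℝ} {g x y : E} {t : ℝ}
    (hf : HasGradientAt f g (lineMap x y t)) :
    HasDerivAt (f ∘ lineMap x y) ⟪g, y - x⟫ t := by
  simpa using (hasGradientAt_iff_hasFDerivAt.mp hf).comp_hasDerivAt t hasDerivAt_lineMap

theorem HasGradientAt.sub_inner_left {f : E → ℝ} {g x : E} (hf : HasGradientAt f g x) (a : E) :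
    HasGradientAt (fun z => f z - ⟪a, z⟫) (g - a) x := by
  rw [hasGradientAt_iff_hasFDerivAt, map_sub]
  exact (hasGradientAt_iff_hasFDerivAt.mp hf).sub (innerSL ℝ a).hasFDerivAt

theorem HasGradientAt.const_mul_sum {ι : Type*} {s : Finset ι} {f : ι → E → ℝ} {g : ι → E}
    {x : E} (c : ℝ) (hf : ∀ i ∈ s, HasGradientAt (f i) (g i) x) :
    HasGradientAt (fun z => c * ∑ i ∈ s, f i z) (c • ∑ i ∈ s, g i) x := by
  rw [hasGradientAt_iff_hasFDerivAt, map_smul, map_sum]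
  exact (HasFDerivAt.fun_sum fun i hi => hasGradientAt_iff_hasFDerivAt.mp (hf i hi)).const_mul c

theorem ConvexOn.add_inner_le_of_hasGradientAt_s6 {f : E → ℝ} {g x : E}
    (hconv : ConvexOn ℝ Set.univ f) (hf : HasGradientAt f g x) (y : E) :
    f x + ⟪g, y - x⟫ ≤ f y := by
  have hline : ConvexOn ℝ Set.univ (f ∘ lineMap (k := ℝ) x y) := hconv.comp_affineMap _
  have hderiv : HasDerivAt (f ∘ lineMap (k := ℝ) x y) ⟪g, y - x⟫ 0 :=
    HasGradientAt.hasDerivAt_comp_lineMap (by simpa using hf)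
  have := hline.le_slope_of_hasDerivAt (Set.mem_univ 0) (Set.mem_univ 1) zero_lt_one hderiv
  simp only [slope_def_field, Function.comp_apply, lineMap_apply_one, lineMap_apply_zero,
    sub_zero, div_one] at this
  linarith

theorem ConvexOn.bregmanDiv_nonneg {f : E → ℝ} {f' : E → E} (hconv : ConvexOn ℝ Set.univ f)
    (hf : ∀ z, HasGradientAt f (f' z) z) (x y : E) : 0 ≤ bregmanDiv f f' x y := by
  have := hconv.add_inner_le_of_hasGradientAt_s6 (hf y) x
  unfold bregmanDiv; linarith

theorem le_add_inner_add_of_lipschitz_gradient {f : E → ℝ} {f' : E → E} {L : ℝ}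
    (hf : ∀ z, HasGradientAt f (f' z) z) (hlip : ∀ z w, ‖f' z - f' w‖ ≤ L * ‖z - w‖)
    (x y : E) :
    f y ≤ f x + ⟪f' x, y - x⟫ + L / 2 * ‖y - x‖ ^ 2 := by
  set c := L / 2 * ‖y - x‖ ^ 2
  let h : ℝ → ℝ := fun t => (f ∘ lineMap x y) t - t * ⟪f' x, y - x⟫ - t ^ 2 * c
  have hderiv : ∀ t, HasDerivAt h (⟪f' (lineMap x y t) - f' x, y - x⟫ - 2 * t * c) t := by
    intro t
    refine ((((hf (lineMap x y t)).hasDerivAt_comp_lineMap).sub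
      (hasDerivAt_mul_const ⟪f' x, y - x⟫)).sub ((hasDerivAt_pow 2 t).mul_const c)).congr_deriv ?_
    rw [inner_sub_left]; push_cast; ring
  have hnonpos : ∀ t ∈ interior (Set.Ici (0 : ℝ)),
      ⟪f' (lineMap x y t) - f' x, y - x⟫ - 2 * t * c ≤ 0 := by
    intro t ht
    rw [interior_Ici] at ht
    have hdist : ‖lineMap x y t - x‖ = t * ‖y - x‖ := by
      rw [← dist_eq_norm, dist_lineMap_left, Real.norm_of_nonneg ht.le, dist_eq_norm']
    have := calc ⟪f' (lineMap x y t) - f' x, y - x⟫ ≤ ‖f' (lineMap x y t) - f' x‖ * ‖y - x‖ :=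
          real_inner_le_norm _ _
      _ ≤ L * (t * ‖y - x‖) * ‖y - x‖ := by
          rw [← hdist]; gcongr; exact hlip _ _
      _ = 2 * t * c := by ring
    linarith
  have hanti : AntitoneOn h (Set.Ici 0) :=
    antitoneOn_of_hasDerivWithinAt_nonpos (convex_Ici 0)
      (fun t _ => (hderiv t).continuousAt.continuousWithinAt)
      (fun t _ => (hderiv t).hasDerivWithinAt) hnonpos
  have := hanti Set.self_mem_Ici (Set.mem_Ici.mpr zero_le_one) zero_le_one
  simp only [h, Function.comp_apply, lineMap_apply_one, lineMap_apply_zero, one_mul, one_pow,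
    zero_mul, sub_zero, ne_eq, OfNat.ofNat_ne_zero, not_false_eq_true, zero_pow] at this
  linarith

theorem sq_norm_le_of_lipschitz_gradient_of_isMinOn {f : E → ℝ} {f' : E → E} {L : ℝ}
    (hL : 0 < L) (hf : ∀ z, HasGradientAt f (f' z) z)
    (hlip : ∀ z w, ‖f' z - f' w‖ ≤ L * ‖z - w‖) {y : E} (hmin : IsMinOn f Set.univ y) (x : E) :
    ‖f' x‖ ^ 2 ≤ 2 * L * (f x - f y) := by
  -- a gradient step of length `1 / L` from `x` decreases `f` by at least `‖f' x‖² / (2L)`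
  have hstep := le_add_inner_add_of_lipschitz_gradient hf hlip x (x - L⁻¹ • f' x)
  have hy : f y ≤ f (x - L⁻¹ • f' x) := hmin (Set.mem_univ _)
  rw [sub_sub_cancel_left, inner_neg_right, real_inner_smul_right, real_inner_self_eq_norm_sq,
    norm_neg, norm_smul, Real.norm_of_nonneg (inv_nonneg.mpr hL.le)] at hstep
  have hquad : L⁻¹ * ‖f' x‖ ^ 2 - L / 2 * (L⁻¹ * ‖f' x‖) ^ 2 = ‖f' x‖ ^ 2 / (2 * L) := by
    field_simp; ring
  rw [← div_le_iff₀' (by positivity)]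
  linarith

theorem ConvexOn.sq_norm_sub_le_bregmanDiv {f : E → ℝ} {f' : E → E} {L : ℝ} (hL : 0 < L)
    (hconv : ConvexOn ℝ Set.univ f) (hf : ∀ z, HasGradientAt f (f' z) z)
    (hlip : ∀ z w, ‖f' z - f' w‖ ≤ L * ‖z - w‖) (x y : E) :
    ‖f' x - f' y‖ ^ 2 ≤ 2 * L * bregmanDiv f f' x y := by
  set φ : E → ℝ := fun z => f z - ⟪f' y, z⟫
  have hφ : ∀ z, HasGradientAt φ (f' z - f' y) z := fun z => (hf z).sub_inner_left (f' y)
  have hφlip : ∀ z w, ‖(f' z - f' y) - (f' w - f' y)‖ ≤ L * ‖z - w‖ := by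
    simpa only [sub_sub_sub_cancel_right] using hlip
  have hmin : IsMinOn φ Set.univ y := isMinOn_univ_iff.mpr fun z => by
    have := hconv.bregmanDiv_nonneg hf z y
    simp only [bregmanDiv, inner_sub_right] at this
    simp only [φ]; linarith
  have := sq_norm_le_of_lipschitz_gradient_of_isMinOn hL hφ hφlip hmin x
  simpa only [bregmanDiv, φ, inner_sub_right, sub_sub_sub_cancel_right, sub_sub_sub_comm] using this

theorem ConvexOn.sq_norm_sub_le_four_mul_bregmanDiv_add {f : E → ℝ} {f' : E → E} {L : ℝ}
    (hL : 0 < L) (hconv : ConvexOn ℝ Set.univ f) (hf : ∀ z, HasGradientAt f (f' z) z)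
    (hlip : ∀ z w, ‖f' z - f' w‖ ≤ L * ‖z - w‖) (x x' y : E) :
    ‖f' x - f' x'‖ ^ 2 ≤ 4 * L * (bregmanDiv f f' x y + bregmanDiv f f' x' y) := by
  have htri : ‖f' x - f' x'‖ ≤ ‖f' x - f' y‖ + ‖f' x' - f' y‖ := by
    simpa only [sub_sub_sub_cancel_right] using norm_sub_le (f' x - f' y) (f' x' - f' y)
  calc ‖f' x - f' x'‖ ^ 2 ≤ (‖f' x - f' y‖ + ‖f' x' - f' y‖) ^ 2 := by gcongr
    _ ≤ 2 * (‖f' x - f' y‖ ^ 2 + ‖f' x' - f' y‖ ^ 2) := add_sq_le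
    _ ≤ 2 * (2 * L * bregmanDiv f f' x y + 2 * L * bregmanDiv f f' x' y) := by
        gcongr <;> exact hconv.sq_norm_sub_le_bregmanDiv hL hf hlip _ _
    _ = 4 * L * (bregmanDiv f f' x y + bregmanDiv f f' x' y) := by ring

theorem bregmanDiv_le_sub_of_isMinOn_add {g h : E → ℝ} {g' : E → E} {x₀ : E}
    (hg : HasGradientAt g (g' x₀) x₀) (hh : ConvexOn ℝ Set.univ h)
    (hmin : IsMinOn (g + h) Set.univ x₀) (z : E) :
    bregmanDiv g g' z x₀ ≤ (g + h) z - (g + h) x₀ := by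
  -- replacing `h` by its chord on the segment to `z` gives a differentiable majorant of `g + h`
  let ψ : ℝ → ℝ := fun t => g (lineMap x₀ z t) + (h x₀ + t * (h z - h x₀))
  have hψ : HasDerivAt ψ (⟪g' x₀, z - x₀⟫ + (h z - h x₀)) 0 :=
    (HasGradientAt.hasDerivAt_comp_lineMap (by simpa using hg)).add
      ((hasDerivAt_mul_const (h z - h x₀)).const_add (h x₀))
  have hψmin : IsMinOn ψ (Set.Icc 0 1) 0 := isMinOn_iff.mpr fun t ht => by
    have hconv : h (lineMap x₀ z t) ≤ (1 - t) * h x₀ + t * h z := by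
      simpa [lineMap_apply_module] using
        hh.2 (Set.mem_univ x₀) (Set.mem_univ z) (sub_nonneg.mpr ht.2) ht.1 (sub_add_cancel 1 t)
    have := isMinOn_univ_iff.mp hmin (lineMap x₀ z t)
    simp only [Pi.add_apply] at this
    simp only [ψ, lineMap_apply_zero, zero_mul, add_zero]
    linarith
  have hone : (1 : ℝ) ∈ posTangentConeAt (Set.Icc 0 1) 0 :=
    mem_posTangentConeAt_of_segment_subset (by simp [segment_eq_Icc])
  have := hψmin.localize.hasFDerivWithinAt_nonneg hψ.hasFDerivAt.hasFDerivWithinAt hone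
  simp only [ContinuousLinearMap.toSpanSingleton_apply, smul_eq_mul, one_mul] at this
  simp only [bregmanDiv, Pi.add_apply]
  linarith

theorem mul_sum_bregmanDiv_le_sub_of_isMinOn {ι : Type*} (s : Finset ι) (c : ℝ)
    {f : ι → E → ℝ} {f' : ι → E → E} {r : E → ℝ} {x₀ : E}
    (hf : ∀ i ∈ s, HasGradientAt (f i) (f' i x₀) x₀) (hr : ConvexOn ℝ Set.univ r)
    (hmin : IsMinOn (fun w => c * ∑ i ∈ s, f i w + r w) Set.univ x₀) (z : E) :
    c * ∑ i ∈ s, bregmanDiv (f i) (f' i) z x₀ ≤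
      (c * ∑ i ∈ s, f i z + r z) - (c * ∑ i ∈ s, f i x₀ + r x₀) := by
  have hg : HasGradientAt (fun w => c * ∑ i ∈ s, f i w) ((fun w => c • ∑ i ∈ s, f' i w) x₀) x₀ :=
    HasGradientAt.const_mul_sum c hf
  rw [← bregmanDiv_const_mul_sum]
  exact bregmanDiv_le_sub_of_isMinOn_add hg hr hmin z

end InnerProductSpace

theorem svrg_weighted_variance_bound_general {d n : ℕ} (L : ℝ) (hL : 0 < L)
    (f : Fin n → EuclideanSpace ℝ (Fin d) → ℝ)
    (f' : Fin n → EuclideanSpace ℝ (Fin d) → EuclideanSpace ℝ (Fin d))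
    (r : EuclideanSpace ℝ (Fin d) → ℝ)
    (hgrad : ∀ i x, HasGradientAt (f i) (f' i x) x)
    (hfconv : ∀ i, ConvexOn ℝ Set.univ (f i))
    (hsmooth : ∀ i x y, ‖f' i x - f' i y‖ ≤ L * ‖x - y‖)
    (hrconv : ConvexOn ℝ Set.univ r)
    (F : EuclideanSpace ℝ (Fin d) → ℝ)
    (hF : ∀ x, F x = (n : ℝ)⁻¹ * ∑ i, f i x + r x)
    (xstar : EuclideanSpace ℝ (Fin d)) (hmin : ∀ x, F xstar ≤ F x)
    (x xt : EuclideanSpace ℝ (Fin d))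
    (gradf : EuclideanSpace ℝ (Fin d) → EuclideanSpace ℝ (Fin d))
    (hgradf : ∀ z, gradf z = (n : ℝ)⁻¹ • ∑ j, f' j z)
    (p : Fin n → EuclideanSpace ℝ (Fin d))
    (hp : ∀ i, p i = f' i x - f' i xt + gradf xt)
    (α β : ℝ) (hβ : 0 < β) (hαβ : β ≤ α) :
    α * ((n : ℝ)⁻¹ * ∑ i, ‖p i - gradf x‖ ^ 2) -
      β * ((n : ℝ)⁻¹ * ∑ i, ‖f' i x - f' i xt‖ ^ 2) ≤
      4 * L * (α - β) * (F x - F xstar + F xt - F xstar) := by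
  set V := (n : ℝ)⁻¹ * ∑ i, ‖p i - gradf x‖ ^ 2
  set S := (n : ℝ)⁻¹ * ∑ i, ‖f' i x - f' i xt‖ ^ 2
  have hVS : V ≤ S := by
    have hcentered : ∀ i, p i - gradf x =
        (f' i x - f' i xt) - (n : ℝ)⁻¹ • ∑ j, (f' j x - f' j xt) := by
      intro i
      rw [hp, hgradf, hgradf, sum_sub_distrib, smul_sub]
      abel
    simp only [V, S, hcentered]
    refine mul_le_mul_of_nonneg_left ?_ (by positivity)
    simpa using sum_norm_sub_mean_sq_le fun i => f' i x - f' i xt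
  have hgap : ∀ z, (n : ℝ)⁻¹ * ∑ i, bregmanDiv (f i) (f' i) z xstar ≤ F z - F xstar := by
    intro z
    rw [hF, hF]
    exact mul_sum_bregmanDiv_le_sub_of_isMinOn _ _ (fun i _ => hgrad i xstar) hrconv
      (isMinOn_univ_iff.mpr fun w => by simpa only [hF] using hmin w) z
  have hS : S ≤ 4 * L * (F x - F xstar + F xt - F xstar) := by
    calc S ≤ (n : ℝ)⁻¹ * ∑ i, 4 * L *
          (bregmanDiv (f i) (f' i) x xstar + bregmanDiv (f i) (f' i) xt xstar) := by
          refine mul_le_mul_of_nonneg_left (sum_le_sum fun i _ => ?_) (by positivity)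
          exact (hfconv i).sq_norm_sub_le_four_mul_bregmanDiv_add hL (hgrad i) (hsmooth i) _ _ _
      _ = 4 * L * ((n : ℝ)⁻¹ * ∑ i, bregmanDiv (f i) (f' i) x xstar +
          (n : ℝ)⁻¹ * ∑ i, bregmanDiv (f i) (f' i) xt xstar) := by
          rw [← mul_sum, sum_add_distrib]; ring
      _ ≤ 4 * L * (F x - F xstar + F xt - F xstar) := by
          linarith [mul_le_mul_of_nonneg_left (add_le_add (hgap x) (hgap xt)) (by positivity :
            (0 : ℝ) ≤ 4 * L)]
  linarith [mul_le_mul_of_nonneg_left hVS (hβ.le.trans hαβ),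
    mul_le_mul_of_nonneg_left hS (sub_nonneg.mpr hαβ)]

theorem svrg_weighted_variance_bound {d n : ℕ} (hn : 0 < n) (L : ℝ) (hL : 0 < L)
    (f : Fin n → EuclideanSpace ℝ (Fin d) → ℝ)
    (f' : Fin n → EuclideanSpace ℝ (Fin d) → EuclideanSpace ℝ (Fin d))
    (r : EuclideanSpace ℝ (Fin d) → ℝ)
    (hgrad : ∀ i x, HasGradientAt (f i) (f' i x) x)
    (hfconv : ∀ i, ConvexOn ℝ Set.univ (f i))
    (hsmooth : ∀ i x y, ‖f' i x - f' i y‖ ≤ L * ‖x - y‖)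
    (hrconv : ConvexOn ℝ Set.univ r)
    (F : EuclideanSpace ℝ (Fin d) → ℝ)
    (hF : ∀ x, F x = (n : ℝ)⁻¹ * ∑ i, f i x + r x)
    (xstar : EuclideanSpace ℝ (Fin d)) (hmin : ∀ x, F xstar ≤ F x)
    (x xt : EuclideanSpace ℝ (Fin d))
    (gradf : EuclideanSpace ℝ (Fin d) → EuclideanSpace ℝ (Fin d))
    (hgradf : ∀ z, gradf z = (n : ℝ)⁻¹ • ∑ j, f' j z)
    (p : Fin n → EuclideanSpace ℝ (Fin d))
    (hp : ∀ i, p i = f' i x - f' i xt + gradf xt)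
    (α β : ℝ) (hβ : 0 < β) (hαβ : β ≤ α) :
    α * ((n : ℝ)⁻¹ * ∑ i, ‖p i - gradf x‖ ^ 2) -
      β * ((n : ℝ)⁻¹ * ∑ i, ‖f' i x - f' i xt‖ ^ 2) ≤
      4 * L * (α - β) * (F x - F xstar + F xt - F xstar) :=
  svrg_weighted_variance_bound_general L hL f f' r hgrad hfconv hsmooth hrconv F hF xstar hmin x xt
    gradf hgradf p hp α β hβ hαβ
end
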